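/- Let ε_g, ε_c, ε_J ≥ 0, r_l > 0 and π ≥ 1. Let g, g̃ ∈ ℝⁿ with ‖g̃ − g‖ ≤ ε_g, let c, c̃ ∈ ℝᵐ with ‖c̃ − c‖_∞ ≤ ε_c, let M, M̃ ∈ ℝ^{m×n} with ‖M̃ − M‖_∞ ≤ ε_J, let H ∈ ℝ^{n×n}, and let d ∈ ℝⁿ with ‖d‖ ≤ r_l. Define the exact model decrease Δq = −gᵀd − (1/2)dᵀHd + π(‖max{c,0}‖_∞ − ‖max{c + Md, 0}‖_∞) and the noisy model decrease Δq̃ = −g̃ᵀd − (1/2)dᵀHd + π(‖max{c̃,0}‖_∞ − ‖max{c̃ + M̃d, 0}‖_∞). Then Δq − Δq̃ ≥ −ε_g·r_l − 2π·ε_c − π·ε_J·r_l. -/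

import Mathlib

noncomputable section

/-- `Vec n` is `ℝⁿ` with the Euclidean norm. -/
abbrev Vec (n : ℕ) := EuclideanSpace ℝ (Fin n)

/-- The dot product `gᵀd`. -/
def dotp {n : ℕ} (g d : Vec n) : ℝ := ∑ i, g i * d i

/-- The quadratic form `dᵀHd`. -/
def quad {n : ℕ} (H : Matrix (Fin n) (Fin n) ℝ) (d : Vec n) : ℝ :=
  ∑ i, ∑ j, d i * H i j * d j

/-- Componentwise positive part `max{u, 0}`. -/
def posv {m : ℕ} (u : Fin m → ℝ) : Fin m → ℝ := fun i => max (u i) 0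

/-- The ℓ∞ norm `‖u‖_∞ = maxᵢ |uᵢ|`. -/
def normInf {m : ℕ} (u : Fin m → ℝ) : ℝ := ⨆ i, |u i|

/-- The matrix ℓ∞ norm: maximum ℓ¹ norm of the rows. -/
def matNormInf {m n : ℕ} (M : Matrix (Fin m) (Fin n) ℝ) : ℝ := ⨆ i, ∑ j, |M i j|

lemma normInf_nonneg {m : ℕ} (u : Fin m → ℝ) : 0 ≤ normInf u :=
  Real.iSup_nonneg fun i => abs_nonneg _

lemma le_normInf {m : ℕ} (u : Fin m → ℝ) (i : Fin m) : |u i| ≤ normInf u :=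
  le_ciSup (f := fun j => |u j|) (Set.Finite.bddAbove (Set.finite_range _)) i

lemma normInf_le {m : ℕ} (u : Fin m → ℝ) {b : ℝ} (hb : 0 ≤ b)
    (h : ∀ i, |u i| ≤ b) : normInf u ≤ b :=
  Real.iSup_le h hb

lemma normInf_posv_key {m : ℕ} (u v : Fin m → ℝ) :
    normInf (posv u) ≤ normInf (posv v) + normInf (u - v) := by
  apply Real.iSup_le
  · intro i
    have h1 : |max (u i) 0 - max (v i) 0| ≤ |u i - v i| := abs_max_sub_max_le_abs _ _ _
    have h2 : |max (v i) 0| ≤ normInf (posv v) := le_normInf (posv v) i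
    have h3 : |u i - v i| ≤ normInf (u - v) := by
      simpa using le_normInf (u - v) i
    have : |max (u i) 0| ≤ |max (v i) 0| + |max (u i) 0 - max (v i) 0| := by
      have := abs_sub_abs_le_abs_sub (max (u i) 0) (max (v i) 0)
      linarith [abs_abs (max (u i) 0)]
    calc |posv u i| = |max (u i) 0| := rfl
      _ ≤ |max (v i) 0| + |u i - v i| := by linarith
      _ ≤ normInf (posv v) + normInf (u - v) := add_le_add h2 h3
  · exact add_nonneg (normInf_nonneg _) (normInf_nonneg _)

lemma abs_apply_le_norm {n : ℕ} (d : Vec n) (j : Fin n) : |d j| ≤ ‖d‖ := by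
  rw [EuclideanSpace.norm_eq, ← Real.sqrt_sq_eq_abs]
  apply Real.sqrt_le_sqrt
  have := Finset.single_le_sum (f := fun i => ‖d i‖ ^ 2)
    (fun i _ => sq_nonneg _) (Finset.mem_univ j)
  simpa [Real.norm_eq_abs, sq_abs] using this

/-- The exact quadratic merit-model decrease `Δq` exceeds the noisy one `Δq̃`
up to the noise error `−ε_g·r_l − 2π·ε_c − π·ε_J·r_l`. -/
theorem model_decrease_noise_bound
    {m n : ℕ} (εg εc εJ rl π : ℝ)
    (hεg : 0 ≤ εg) (hεc : 0 ≤ εc) (hεJ : 0 ≤ εJ) (hrl : 0 < rl) (hπ : 1 ≤ π)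
    (g gt : Vec n) (hg : ‖gt - g‖ ≤ εg)
    (c ct : Fin m → ℝ) (hc : normInf (ct - c) ≤ εc)
    (M Mt : Matrix (Fin m) (Fin n) ℝ) (hM : matNormInf (Mt - M) ≤ εJ)
    (H : Matrix (Fin n) (Fin n) ℝ)
    (d : Vec n) (hd : ‖d‖ ≤ rl) :
    (-(dotp g d) - (1/2) * quad H d
        + π * (normInf (posv c) - normInf (posv (c + M.mulVec d))))
      - (-(dotp gt d) - (1/2) * quad H d
        + π * (normInf (posv ct) - normInf (posv (ct + Mt.mulVec d))))
      ≥ -(εg * rl) - 2 * π * εc - π * εJ * rl := by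
  have hπ0 : 0 ≤ π := le_trans zero_le_one hπ
  -- gradient part
  have hdot : dotp gt d - dotp g d ≥ -(εg * rl) := by
    have hinner : dotp gt d - dotp g d = (inner ℝ (gt - g) d : ℝ) := by
      simp [dotp, PiLp.inner_apply, RCLike.inner_apply, conj_trivial, sub_mul,
        Finset.sum_sub_distrib]
      rw [← Finset.sum_sub_distrib]; exact Finset.sum_congr rfl (fun i _ => by ring)
    have := abs_real_inner_le_norm (gt - g) d
    have hbd : ‖gt - g‖ * ‖d‖ ≤ εg * rl := by
      apply mul_le_mul hg hd (norm_nonneg _) hεg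
    rw [hinner]
    have habs : |(inner ℝ (gt - g) d : ℝ)| ≤ εg * rl := le_trans this hbd
    linarith [abs_le.mp habs]
  -- first constraint part
  have hc1 : normInf (posv ct) ≤ normInf (posv c) + εc :=
    le_trans (normInf_posv_key ct c) (by linarith [hc])
  -- second constraint part
  have hrow : ∀ i, |ct i + Mt.mulVec d i - (c i + M.mulVec d i)| ≤ εc + εJ * rl := by
    intro i
    have h1 : |ct i - c i| ≤ εc := le_trans (by simpa using le_normInf (ct - c) i) hc
    have h2 : |Mt.mulVec d i - M.mulVec d i| ≤ εJ * rl := by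
      have heq : Mt.mulVec d i - M.mulVec d i = ∑ j, (Mt i j - M i j) * d j := by
        simp [Matrix.mulVec, dotProduct, sub_mul, Finset.sum_sub_distrib]
      rw [heq]
      calc |∑ j, (Mt i j - M i j) * d j| ≤ ∑ j, |(Mt i j - M i j) * d j| :=
            Finset.abs_sum_le_sum_abs _ _
        _ ≤ ∑ j, |Mt i j - M i j| * rl := by
            apply Finset.sum_le_sum
            intro j _
            rw [abs_mul]
            exact mul_le_mul_of_nonneg_left
              (le_trans (abs_apply_le_norm d j) hd) (abs_nonneg _)
        _ = (∑ j, |Mt i j - M i j|) * rl := by rw [Finset.sum_mul]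
        _ ≤ εJ * rl := by
            apply mul_le_mul_of_nonneg_right _ hrl.le
            refine le_trans ?_ hM
            have : (∑ j, |(Mt - M) i j|) ≤ matNormInf (Mt - M) :=
              le_ciSup (f := fun k => ∑ j, |(Mt - M) k j|) (Set.Finite.bddAbove (Set.finite_range _)) i
            simpa [Matrix.sub_apply] using this
    calc |ct i + Mt.mulVec d i - (c i + M.mulVec d i)|
        = |(ct i - c i) + (Mt.mulVec d i - M.mulVec d i)| := by congr 1; ring
      _ ≤ |ct i - c i| + |Mt.mulVec d i - M.mulVec d i| := abs_add_le _ _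
      _ ≤ εc + εJ * rl := add_le_add h1 h2
  have hc2 : normInf (posv (c + M.mulVec d)) ≤
      normInf (posv (ct + Mt.mulVec d)) + (εc + εJ * rl) := by
    refine le_trans (normInf_posv_key (c + M.mulVec d) (ct + Mt.mulVec d)) ?_
    have : normInf ((c + M.mulVec d) - (ct + Mt.mulVec d)) ≤ εc + εJ * rl := by
      apply normInf_le _ (by positivity)
      intro i
      have h := hrow i
      rw [abs_sub_comm] at h
      simpa [Pi.sub_apply, Pi.add_apply] using h
    linarith
  nlinarith [mul_le_mul_of_nonneg_left hc1 hπ0, mul_le_mul_of_nonneg_left hc2 hπ0]
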